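/- Let X be any k-dimensional simplicial complex on a finite vertex set V with Z_{k−1}(X;ℝ) ≠ {0}. Then λ(X) ≤ h'(X). -/

import Mathlib

/-!
Fix a partition `A` and a `ℤ₂`-cochain `f` supported on `F(A_0,…,A_{k-1})`. Lift `f` to a real
cochain `g`, twisted by the sign `(-1) ^ invCount p` of the labelling `p` of vertices by parts. A
`(k+1)`-set `τ` has at most two facets in the support of `f`, those obtained by dropping one of the
two vertices of `τ` lying in a common part; the twist makes their incidence signs opposite, so
`(δ g τ)^2` is the indicator of `(δ_{ℤ₂} f)(τ) ≠ 0` whenever all facets of `τ` are faces. The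
component `z` of `g` orthogonal to `B^{k-1}` is a cycle with `δ z = δ g` on such `τ` (as
`δ ∘ δ = 0`). Hence `⟨L^up z, z⟩ = |δ_X f|`, while the identity `L^up + L^down = |V| · id` on the
full simplex gives `|δ_{K(X)} f| ≤ ‖δ z‖^2 ≤ |V| ‖z‖^2`. So the Rayleigh quotient of `z` is at
most `|V| |δ_X f| / |δ_{K(X)} f|`.
-/

open Finset

namespace HigherCheeger

variable {V : Type*} [DecidableEq V] [Fintype V] [LinearOrder V]

/-- An abstract simplicial complex: a family of finite subsets of `V`
closed under taking subsets. -/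
def IsComplex (X : Finset (Finset V)) : Prop :=
  ∀ σ ∈ X, ∀ τ ⊆ σ, τ ∈ X

/-- `X` is `k`-dimensional: every face has at most `k+1` vertices
and some face has exactly `k+1` vertices. -/
def IsDim (X : Finset (Finset V)) (k : ℕ) : Prop :=
  (∀ σ ∈ X, σ.card ≤ k + 1) ∧ ∃ σ ∈ X, σ.card = k + 1

/-- The faces of `X` of cardinality `c` (i.e. of dimension `c - 1`). -/
def faces (X : Finset (Finset V)) (c : ℕ) : Finset (Finset V) :=
  X.filter fun σ => σ.card = c

/-- `X` has complete `(k-1)`-skeleton: every subset of `V` of size at most `k` is a face. -/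
def CompleteSkeleton (X : Finset (Finset V)) (k : ℕ) : Prop :=
  ∀ σ : Finset V, σ.card ≤ k → σ ∈ X

/-- The `k`-dimensional completion `K(X)`. -/
def completion (X : Finset (Finset V)) (k : ℕ) : Finset (Finset V) :=
  X ∪ (Finset.univ.filter fun τ : Finset V => τ.card = k + 1 ∧ ∀ v ∈ τ, τ.erase v ∈ X)

/-- The complete `k`-dimensional complex `K_n^k` on the vertex set `V`. -/
def completeComplex (V : Type*) [DecidableEq V] [Fintype V] (k : ℕ) : Finset (Finset V) :=
  Finset.univ.filter fun σ : Finset V => σ.card ≤ k + 1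

/-- The oriented incidence number `[τ:σ]` (with respect to the linear order on `V`):
`(-1)^j` if `σ = τ \ {v_j}` where `v_j` is the `j`-th smallest vertex of `τ`, and `0` otherwise. -/
def incidence (τ σ : Finset V) : ℝ :=
  if σ ⊆ τ ∧ σ.card + 1 = τ.card then
    ∑ v ∈ τ \ σ, (-1 : ℝ) ^ (τ.filter fun w => w < v).card
  else 0

/-- The real coboundary operator `δ` applied to a cochain living on the faces of
cardinality `c`; the result lives on faces of cardinality `c + 1`. -/
def delta (X : Finset (Finset V)) (c : ℕ) (f : Finset V → ℝ) : Finset V → ℝ :=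
  fun τ => ∑ σ ∈ faces X c, incidence τ σ * f σ

/-- The real boundary operator `∂` (the adjoint of `δ`) applied to a cochain living
on the faces of cardinality `c`; the result lives on faces of cardinality `c - 1`. -/
def bdry (X : Finset (Finset V)) (c : ℕ) (f : Finset V → ℝ) : Finset V → ℝ :=
  fun σ => ∑ τ ∈ faces X c, incidence τ σ * f τ

/-- The inner product of two cochains on the faces of cardinality `c`. -/
def inn (X : Finset (Finset V)) (c : ℕ) (f g : Finset V → ℝ) : ℝ :=
  ∑ σ ∈ faces X c, f σ * g σ

/-- The upper Laplacian `L^up_{k-1} = ∂_k δ_{k-1}` acting on `(k-1)`-cochains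
(functions on faces of cardinality `k`). -/
def lapUp (X : Finset (Finset V)) (k : ℕ) (f : Finset V → ℝ) : Finset V → ℝ :=
  bdry X (k + 1) (delta X k f)

/-- The lower Laplacian `L^down_{k-1} = δ_{k-2} ∂_{k-1}` acting on `(k-1)`-cochains. -/
def lapDown (X : Finset (Finset V)) (k : ℕ) (f : Finset V → ℝ) : Finset V → ℝ :=
  delta X (k - 1) (bdry X k f)

/-- `f ∈ Z_{k-1}(X;ℝ) = ker ∂_{k-1}`. -/
def IsCycle (X : Finset (Finset V)) (k : ℕ) (f : Finset V → ℝ) : Prop :=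
  ∀ σ : Finset V, bdry X k f σ = 0

/-- `f ∈ B^{k-1}(X;ℝ) = im δ_{k-2}` (as a cochain, i.e. on the `(k-1)`-faces). -/
def IsCobdry (X : Finset (Finset V)) (k : ℕ) (f : Finset V → ℝ) : Prop :=
  ∃ g : Finset V → ℝ, ∀ σ ∈ faces X k, f σ = delta X (k - 1) g σ

/-- The spectral gap `λ(X)`: the minimum of the Rayleigh quotient
`⟨L^up_{k-1}(X) f, f⟩ / ⟨f, f⟩` over nonzero `f ∈ Z_{k-1}(X;ℝ)`. -/
noncomputable def spectralGap (X : Finset (Finset V)) (k : ℕ) : ℝ :=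
  sInf {r : ℝ | ∃ f : Finset V → ℝ, IsCycle X k f ∧ inn X k f f ≠ 0 ∧
    r = inn X k (lapUp X k f) f / inn X k f f}

/-- A partition of `V` into `m` (nonempty) parts. -/
def IsPartition {m : ℕ} (A : Fin m → Finset V) : Prop :=
  (∀ i, (A i).Nonempty) ∧ ∀ v : V, ∃! i, v ∈ A i

/-- The linear order on `V` is adapted to the family of parts `A`. -/
def OrderAdapted {m : ℕ} (A : Fin m → Finset V) : Prop :=
  ∀ i j : Fin m, i < j → ∀ v ∈ A i, ∀ w ∈ A j, v < w

/-- `F(A_0,…,A_k)`: the `k`-faces of `X` with exactly one vertex in each part. -/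
def Fset (X : Finset (Finset V)) (k : ℕ) (A : Fin (k + 1) → Finset V) : Finset (Finset V) :=
  (faces X (k + 1)).filter fun τ => ∀ i, (τ ∩ A i).card = 1

/-- `F^∂(A_0,…,A_k)`: the `(k+1)`-element members of `K(X)` with exactly one vertex
in each part. -/
def Fpar (X : Finset (Finset V)) (k : ℕ) (A : Fin (k + 1) → Finset V) : Finset (Finset V) :=
  (faces (completion X k) (k + 1)).filter fun τ => ∀ i, (τ ∩ A i).card = 1

/-- The value `|V|·|F(A_0,…,A_k)| / |F^∂(A_0,…,A_k)|` of a partition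
(`⊤` if the denominator is `0`). -/
noncomputable def cheegerVal (X : Finset (Finset V)) (k : ℕ) (A : Fin (k + 1) → Finset V) :
    EReal :=
  if (Fpar X k A).card = 0 then ⊤
  else (((Fintype.card V * (Fset X k A).card : ℝ) / ((Fpar X k A).card : ℝ) : ℝ) : EReal)

/-- The Cheeger constant `h(X)`. -/
noncomputable def cheeger (X : Finset (Finset V)) (k : ℕ) : EReal :=
  sInf {r : EReal | ∃ A : Fin (k + 1) → Finset V, IsPartition A ∧ r = cheegerVal X k A}

/-- `d(σ)`: the number of members of `F^∂(A_0,…,A_k)` containing `σ`. -/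
def degPar (X : Finset (Finset V)) (k : ℕ) (A : Fin (k + 1) → Finset V) (σ : Finset V) : ℕ :=
  ((Fpar X k A).filter fun τ => σ ⊆ τ).card

/-- `C(X)` (with respect to the partition `A`):
the maximum over `τ ∈ F^∂(A_0,…,A_k)` of `∑_{v ∈ τ} d(τ \ {v})`. -/
def Cconst (X : Finset (Finset V)) (k : ℕ) (A : Fin (k + 1) → Finset V) : ℕ :=
  (Fpar X k A).sup fun τ => ∑ v ∈ τ, degPar X k A (τ.erase v)

/-- The cochain associated to a partition `A`: `σ ↦ (-1)^l·|A_l|` if `A_l` is the unique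
part disjoint from `σ`, and `0` otherwise. -/
def assocCochain {k : ℕ} (A : Fin (k + 1) → Finset V) (σ : Finset V) : ℝ :=
  if (Finset.univ.filter fun l => σ ∩ A l = ∅).card = 1 then
    ∑ l ∈ Finset.univ.filter fun l => σ ∩ A l = ∅, (-1 : ℝ) ^ (l : ℕ) * ((A l).card : ℝ)
  else 0

/-- The `Z₂`-coboundary: a `(c-1)`-cochain `f` is sent to
`τ ↦ ∑_{v ∈ τ} f (τ \ {v})`. -/
def deltaZ2 (f : Finset V → ZMod 2) (τ : Finset V) : ZMod 2 :=
  ∑ v ∈ τ, f (τ.erase v)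

/-- The support of the `Z₂`-coboundary of `f` in `X`: the faces of `X` of cardinality
`k + 1` on which the `Z₂`-coboundary of `f` is nonzero.  Its cardinality is `|δ_X f|`. -/
def suppDelta (X : Finset (Finset V)) (k : ℕ) (f : Finset V → ZMod 2) : Finset (Finset V) :=
  (faces X (k + 1)).filter fun τ => deltaZ2 f τ ≠ 0

/-- `F(A_0,…,A_{k-1})`: the `(k-1)`-faces of `X` with exactly one vertex in each of
the `k` parts. -/
def FsetLow (X : Finset (Finset V)) (k : ℕ) (A : Fin k → Finset V) : Finset (Finset V) :=
  (faces X k).filter fun σ => ∀ i, (σ ∩ A i).card = 1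

/-- The Cheeger-type constant `h'(X)`. -/
noncomputable def cheeger' (X : Finset (Finset V)) (k : ℕ) : EReal :=
  sInf {r : EReal | ∃ (A : Fin k → Finset V) (f : Finset V → ZMod 2),
    IsPartition A ∧ (∀ σ, f σ ≠ 0 → σ ∈ FsetLow X k A) ∧
    r = if (suppDelta (completion X k) k f).card = 0 then (⊤ : EReal)
        else (((Fintype.card V * (suppDelta X k f).card : ℝ) /
              ((suppDelta (completion X k) k f).card : ℝ) : ℝ) : EReal)}

/-- The Hamming norm of a `Z₂`-cochain on the faces of cardinality `c`. -/
def hamming (X : Finset (Finset V)) (c : ℕ) (f : Finset V → ZMod 2) : ℕ :=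
  ((faces X c).filter fun σ => f σ ≠ 0).card

/-- `|[f]|`: the minimum Hamming norm of `f + δ_X g` over `g ∈ C^{k-2}(X;Z₂)`. -/
noncomputable def normClass (X : Finset (Finset V)) (k : ℕ) (f : Finset V → ZMod 2) : ℕ :=
  sInf {m : ℕ | ∃ g : Finset V → ZMod 2, m = hamming X k fun σ => f σ + deltaZ2 g σ}

/-- The coboundary expansion `φ(X) = min_f |δ_X f| / |[f]|` (quotients with denominator
`0` are `∞`). -/
noncomputable def phi (X : Finset (Finset V)) (k : ℕ) : EReal :=
  sInf {r : EReal | ∃ f : Finset V → ZMod 2,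
    r = if normClass X k f = 0 then (⊤ : EReal)
        else ((((suppDelta X k f).card : ℝ) / (normClass X k f : ℝ) : ℝ) : EReal)}

/-- `h̃(X) = min_f |V|·|δ_X f| / |δ_{K(X)} f|` (quotients with denominator `0` are `∞`). -/
noncomputable def htilde (X : Finset (Finset V)) (k : ℕ) : EReal :=
  sInf {r : EReal | ∃ f : Finset V → ZMod 2,
    r = if (suppDelta (completion X k) k f).card = 0 then (⊤ : EReal)
        else (((Fintype.card V * (suppDelta X k f).card : ℝ) /
              ((suppDelta (completion X k) k f).card : ℝ) : ℝ) : EReal)}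


end HigherCheeger

namespace HigherCheeger

open Finset

lemma sum_sq_sum_mul_eq {ι κ : Type*} [Fintype ι] [Fintype κ] (a : κ → ι → ℝ) (z : ι → ℝ) :
    ∑ t, (∑ s, a t s * z s) ^ 2 = ∑ s, ∑ s', z s * z s' * ∑ t, a t s * a t s' := by
  simp_rw [sq, sum_mul_sum, mul_sum]
  rw [sum_comm]
  refine sum_congr rfl fun s _ => ?_
  rw [sum_comm]
  exact sum_congr rfl fun s' _ => sum_congr rfl fun t _ => by ring

lemma neg_one_pow_eq_neg_of_succ {m n : ℕ} (h : m = n + 1 ∨ n = m + 1) :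
    (-1 : ℝ) ^ m = -(-1) ^ n := by
  rcases h with rfl | rfl <;> rw [pow_succ] <;> ring

lemma neg_one_pow_eq_of_add_two_mul {m n j : ℕ} (h : m + 2 * j = n) :
    (-1 : ℝ) ^ m = (-1) ^ n := by
  rw [← h, pow_add, pow_mul, neg_one_sq, one_pow, mul_one]

lemma sq_val_sub_val (a b : ZMod 2) :
    ((a.val : ℝ) - b.val) ^ 2 = if a + b ≠ 0 then 1 else 0 := by
  fin_cases a <;> fin_cases b <;> norm_num [ZMod.val] <;> decide

variable {V : Type*}

lemma IsPartition.exists_label {m : ℕ} {A : Fin m → Finset V} (hA : IsPartition A) :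
    ∃ p : V → Fin m, ∀ v i, v ∈ A i ↔ p v = i := by
  choose p hp using fun v => (hA.2 v).exists
  exact ⟨p, fun v i => ⟨fun h => (hA.2 v).unique (hp v) h, fun h => h ▸ hp v⟩⟩

variable [DecidableEq V]

lemma eq_erase_union_of_erase_eq {σ σ' : Finset V} {a b : V} (h : σ.erase a = σ'.erase b)
    (hab : a ≠ b) : σ = (σ ∪ σ').erase b := by
  ext x
  have hx := Finset.ext_iff.mp h x
  simp only [mem_erase, mem_union] at hx ⊢
  grind

lemma card_filter_erase_add {τ : Finset V} {u : V} (q : V → Prop) [DecidablePred q] (hu : u ∈ τ) :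
    #{x ∈ τ.erase u | q x} + (if q u then 1 else 0) = #{x ∈ τ | q x} := by
  rw [filter_erase]
  split_ifs with h
  · exact card_erase_add_one (mem_filter.mpr ⟨hu, h⟩)
  · rw [erase_eq_of_notMem (by simp [h]), add_zero]

lemma faces_subset_faces_completion [Fintype V] (X : Finset (Finset V)) (k : ℕ) :
    faces X (k + 1) ⊆ faces (completion X k) (k + 1) :=
  filter_subset_filter _ subset_union_left

lemma erase_mem_faces_of_mem_faces_completion [Fintype V] {X : Finset (Finset V)} {k : ℕ}
    (hX : IsComplex X) {τ : Finset V} (hτ : τ ∈ faces (completion X k) (k + 1)) {v : V}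
    (hv : v ∈ τ) : τ.erase v ∈ faces X k := by
  obtain ⟨hτK, hτc⟩ := mem_filter.mp hτ
  refine mem_filter.mpr ⟨?_, by rw [card_erase_of_mem hv, hτc, Nat.add_sub_cancel]⟩
  rcases mem_union.mp hτK with h | h
  · exact hX τ h _ (erase_subset v τ)
  · exact (mem_filter.mp h).2.2 v hv

variable [LinearOrder V]

lemma incidence_erase {τ : Finset V} {v : V} (hv : v ∈ τ) :
    incidence τ (τ.erase v) = (-1) ^ #{w ∈ τ | w < v} := by
  rw [incidence, if_pos ⟨erase_subset v τ, card_erase_add_one hv⟩, sdiff_erase_self hv,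
    sum_singleton]

lemma incidence_erase_mul_self {τ : Finset V} {v : V} (hv : v ∈ τ) :
    incidence τ (τ.erase v) * incidence τ (τ.erase v) = 1 := by
  rw [incidence_erase hv, ← pow_add, Even.neg_one_pow ⟨_, rfl⟩]

lemma incidence_ne_zero_iff {τ σ : Finset V} :
    incidence τ σ ≠ 0 ↔ ∃ v ∈ τ, σ = τ.erase v := by
  constructor
  · intro h
    obtain ⟨hsub, hcard⟩ : σ ⊆ τ ∧ #σ + 1 = #τ := by
      by_contra hc
      exact h (if_neg hc)
    obtain ⟨v, hv⟩ := card_eq_one.mp (show #(τ \ σ) = 1 by rw [card_sdiff_of_subset hsub]; omega)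
    have hvσ : v ∈ τ \ σ := hv ▸ mem_singleton_self v
    refine ⟨v, (mem_sdiff.mp hvσ).1, eq_of_subset_of_card_le ?_ ?_⟩
    · exact fun x hx => mem_erase.mpr ⟨by rintro rfl; exact (mem_sdiff.mp hvσ).2 hx, hsub hx⟩
    · rw [card_erase_of_mem (mem_sdiff.mp hvσ).1]
      omega
  · rintro ⟨v, hv, rfl⟩
    rw [incidence_erase hv]
    exact pow_ne_zero _ (by norm_num)

lemma incidence_eq_zero {τ σ : Finset V} (h : ∀ v ∈ τ, σ ≠ τ.erase v) : incidence τ σ = 0 := by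
  by_contra hne
  obtain ⟨v, hv, rfl⟩ := incidence_ne_zero_iff.mp hne
  exact h v hv rfl

/-- The two ways of removing `u` and `w` from `τ` carry opposite signs: this is `δ ∘ δ = 0`. -/
lemma incidence_mul_incidence_erase_erase {τ : Finset V} {u w : V} (hu : u ∈ τ) (hw : w ∈ τ)
    (huw : u ≠ w) :
    incidence τ (τ.erase u) * incidence (τ.erase u) ((τ.erase u).erase w) =
      -(incidence τ (τ.erase w) * incidence (τ.erase w) ((τ.erase w).erase u)) := by
  rw [incidence_erase hu, incidence_erase hw, incidence_erase (mem_erase.mpr ⟨huw.symm, hw⟩),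
    incidence_erase (mem_erase.mpr ⟨huw, hu⟩), ← pow_add, ← pow_add]
  have h₁ := card_filter_erase_add (· < w) hu
  have h₂ := card_filter_erase_add (· < u) hw
  apply neg_one_pow_eq_neg_of_succ
  rcases huw.lt_or_gt with h | h <;> simp only [h, asymm h, if_true, if_false] at h₁ h₂ <;> omega

lemma incidence_mul_incidence_add_incidence_mul_incidence {τ : Finset V} {u w : V} (hu : u ∈ τ)
    (hw : w ∈ τ) (huw : u ≠ w) :
    incidence τ (τ.erase u) * incidence τ (τ.erase w) +
      incidence (τ.erase u) ((τ.erase u).erase w) * incidence (τ.erase w) ((τ.erase u).erase w) =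
    0 := by
  have hcancel := incidence_mul_incidence_erase_erase hu hw huw
  have hb := incidence_erase_mul_self (mem_erase.mpr ⟨huw.symm, hw⟩)
  have hc := incidence_erase_mul_self hw
  rw [erase_right_comm] at hcancel hb ⊢
  linear_combination
    (incidence (τ.erase u) ((τ.erase w).erase u) * incidence τ (τ.erase w)) * hcancel -
      (incidence τ (τ.erase u) * incidence τ (τ.erase w)) * hb -
      (incidence (τ.erase u) ((τ.erase w).erase u) * incidence (τ.erase w) ((τ.erase w).erase u)) * hc

lemma sum_incidence_mul_of_erase_mem {S : Finset (Finset V)} {τ : Finset V}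
    (hS : ∀ v ∈ τ, τ.erase v ∈ S) (F : Finset V → ℝ) :
    ∑ σ ∈ S, incidence τ σ * F σ = ∑ v ∈ τ, incidence τ (τ.erase v) * F (τ.erase v) := by
  rw [← sum_image (f := fun σ => incidence τ σ * F σ) (erase_injOn τ)]
  refine (sum_subset (image_subset_iff.mpr hS) fun σ _ hσ => ?_).symm
  rw [incidence_eq_zero fun v hv h => hσ (mem_image.mpr ⟨v, hv, h.symm⟩), zero_mul]

lemma sum_incidence_mul_insert [Fintype V] (σ : Finset V) (F : Finset V → ℝ) :
    ∑ τ, incidence τ σ * F τ = ∑ v ∈ σᶜ, incidence (insert v σ) σ * F (insert v σ) := by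
  have hinj : Set.InjOn (fun v => insert v σ) ↑σᶜ := fun a ha b _ h => by
    have ha' : a ∈ insert b σ := (show insert a σ = insert b σ from h) ▸ mem_insert_self a σ
    simpa [show a ∉ σ by simpa using ha] using ha'
  rw [← sum_image (f := fun τ => incidence τ σ * F τ) hinj]
  refine (sum_subset (subset_univ _) fun τ _ hτ => ?_).symm
  rw [incidence_eq_zero fun v hv h => hτ (mem_image.mpr
    ⟨v, mem_compl.mpr (by rw [h]; exact notMem_erase v τ), by rw [h, insert_erase hv]⟩), zero_mul]

lemma sum_incidence_mul_incidence_eq_zero {S : Finset (Finset V)} {τ : Finset V}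
    (hS : ∀ v ∈ τ, τ.erase v ∈ S) (ρ : Finset V) :
    ∑ σ ∈ S, incidence τ σ * incidence σ ρ = 0 := by
  rw [sum_incidence_mul_of_erase_mem hS]
  by_cases h : ∃ u ∈ τ, ∃ w ∈ τ.erase u, ρ = (τ.erase u).erase w
  · obtain ⟨u, hu, w, hw', rfl⟩ := h
    obtain ⟨hwu, hw⟩ := mem_erase.mp hw'
    have hvanish : ∀ v ∈ τ, v ∉ ({u, w} : Finset V) →
        incidence τ (τ.erase v) * incidence (τ.erase v) ((τ.erase u).erase w) = 0 := by
      intro v hv hvuw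
      simp only [mem_insert, mem_singleton, not_or] at hvuw
      refine mul_eq_zero_of_right _ (incidence_eq_zero fun x _ h => ?_)
      have hvρ : v ∈ (τ.erase u).erase w := by simp [hv, hvuw.1, hvuw.2]
      rw [h] at hvρ
      exact notMem_erase v τ (mem_of_mem_erase hvρ)
    rw [← sum_subset (by simp [insert_subset_iff, hu, hw]) hvanish, sum_pair hwu.symm,
      incidence_mul_incidence_erase_erase hu hw hwu.symm, erase_right_comm, neg_add_cancel]
  · push Not at h
    exact sum_eq_zero fun v hv =>
      mul_eq_zero_of_right _ (incidence_eq_zero fun w hw => h v hv w hw)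

lemma sum_incidence_mul_self_add [Fintype V] (σ : Finset V) :
    ∑ τ, incidence τ σ * incidence τ σ + ∑ ρ, incidence σ ρ * incidence σ ρ =
      Fintype.card V := by
  have hup : ∀ v ∈ σᶜ, incidence (insert v σ) σ * incidence (insert v σ) σ = 1 := by
    intro v hv
    have h := incidence_erase_mul_self (mem_insert_self v σ)
    rwa [erase_insert (mem_compl.mp hv)] at h
  rw [sum_incidence_mul_insert, sum_incidence_mul_of_erase_mem fun _ _ => mem_univ _,
    sum_congr rfl hup, sum_congr rfl fun v hv => incidence_erase_mul_self hv]
  simp [card_compl, Nat.cast_sub (card_le_univ σ)]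

lemma sum_incidence_mul_incidence_add_of_ne [Fintype V] {σ σ' : Finset V} (hne : σ ≠ σ') :
    ∑ τ, incidence τ σ * incidence τ σ' + ∑ ρ, incidence σ ρ * incidence σ' ρ = 0 := by
  by_cases hadj : ∃ τ : Finset V, ∃ u ∈ τ, ∃ w ∈ τ, σ = τ.erase u ∧ σ' = τ.erase w
  · obtain ⟨τ, u, hu, w, hw, rfl, rfl⟩ := hadj
    have huw : u ≠ w := by rintro rfl; exact hne rfl
    rw [sum_eq_single τ, sum_eq_single ((τ.erase u).erase w)]
    · exact incidence_mul_incidence_add_incidence_mul_incidence hu hw huw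
    · intro ρ _ hρ
      by_contra h
      obtain ⟨⟨a, ha, h₁⟩, ⟨b, -, h₂⟩⟩ :=
        (mul_ne_zero_iff.mp h).imp incidence_ne_zero_iff.mp incidence_ne_zero_iff.mp
      refine hρ (eq_of_subset_of_card_le (fun x hx => ?_) ?_)
      · have hx₁ := h₁ ▸ hx
        have hx₂ := h₂ ▸ hx
        simp only [mem_erase] at hx₁ hx₂ ⊢
        exact ⟨hx₂.2.1, hx₁.2⟩
      · rw [h₁, card_erase_of_mem ha, card_erase_of_mem (mem_erase.mpr ⟨huw.symm, hw⟩)]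
    · simp
    · intro τ' _ hτ'
      by_contra h
      obtain ⟨⟨a, ha, h₁⟩, ⟨b, -, h₂⟩⟩ :=
        (mul_ne_zero_iff.mp h).imp incidence_ne_zero_iff.mp incidence_ne_zero_iff.mp
      refine hτ' (eq_of_subset_of_card_le (fun x hx => ?_) ?_).symm
      · by_cases hxu : x = u
        · exact mem_of_mem_erase (h₂ ▸ mem_erase.mpr ⟨hxu ▸ huw, hx⟩)
        · exact mem_of_mem_erase (h₁ ▸ mem_erase.mpr ⟨hxu, hx⟩)
      · rw [← card_erase_add_one ha, ← h₁, card_erase_add_one hu]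
    · simp
  · push Not at hadj
    rw [sum_eq_zero, sum_eq_zero, add_zero]
    · intro ρ _
      by_contra h
      obtain ⟨⟨a, ha, h₁⟩, ⟨b, hb, h₂⟩⟩ :=
        (mul_ne_zero_iff.mp h).imp incidence_ne_zero_iff.mp incidence_ne_zero_iff.mp
      have hab : a ≠ b := by
        rintro rfl
        exact hne (by rw [← insert_erase ha, ← insert_erase hb, ← h₁, ← h₂])
      exact hadj (σ ∪ σ') b (mem_union_right _ hb) a (mem_union_left _ ha)
        (eq_erase_union_of_erase_eq (h₁.symm.trans h₂) hab)
        (by rw [union_comm]; exact eq_erase_union_of_erase_eq (h₂.symm.trans h₁) hab.symm)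
    · intro τ _
      by_contra h
      obtain ⟨⟨u, hu, h₁⟩, ⟨w, hw, h₂⟩⟩ :=
        (mul_ne_zero_iff.mp h).imp incidence_ne_zero_iff.mp incidence_ne_zero_iff.mp
      exact hadj τ u hu w hw h₁ h₂

lemma sum_incidence_mul_incidence_add [Fintype V] (σ σ' : Finset V) :
    ∑ τ, incidence τ σ * incidence τ σ' + ∑ ρ, incidence σ ρ * incidence σ' ρ =
      if σ = σ' then (Fintype.card V : ℝ) else 0 := by
  split_ifs with h
  · exact h ▸ sum_incidence_mul_self_add σ
  · exact sum_incidence_mul_incidence_add_of_ne h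

/-- On the full simplex, `L^up + L^down = |V| · id`. -/
theorem sum_sq_coboundary_add_sum_sq_boundary [Fintype V] (z : Finset V → ℝ) :
    ∑ τ, (∑ σ, incidence τ σ * z σ) ^ 2 + ∑ ρ, (∑ σ, incidence σ ρ * z σ) ^ 2 =
      Fintype.card V * ∑ σ, z σ ^ 2 := by
  rw [sum_sq_sum_mul_eq, sum_sq_sum_mul_eq (fun ρ σ => incidence σ ρ), ← sum_add_distrib,
    mul_sum]
  refine sum_congr rfl fun σ _ => ?_
  simp_rw [← sum_add_distrib, ← mul_add, sum_incidence_mul_incidence_add]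
  simp only [mul_ite, mul_zero, sum_ite_eq, mem_univ, if_true, sq]
  ring

section Transversal

variable {ι : Type*} [LinearOrder ι] (p : V → ι)

def invCount (σ : Finset V) : ℕ :=
  ∑ y ∈ σ, #{x ∈ σ | x < y ∧ p y < p x}

/-- The position of `v` in `τ` for the lexicographic order by `(p x, x)`. -/
def lexRank (τ : Finset V) (v : V) : ℕ :=
  #{x ∈ τ | p x < p v} + #{x ∈ τ | p x = p v ∧ x < v}

lemma invCount_erase_add {τ : Finset V} {u : V} (hu : u ∈ τ) :
    invCount p (τ.erase u) + #{x ∈ τ | x < u ∧ p u < p x} + #{y ∈ τ | u < y ∧ p y < p u} =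
      invCount p τ := by
  have hrow : ∀ y ∈ τ.erase u, #{x ∈ τ | x < y ∧ p y < p x} =
      #{x ∈ τ.erase u | x < y ∧ p y < p x} + if u < y ∧ p y < p u then 1 else 0 :=
    fun y _ => (card_filter_erase_add _ hu).symm
  have hcol := card_filter_erase_add (fun y => u < y ∧ p y < p u) hu
  simp only [lt_irrefl, false_and, if_false, add_zero] at hcol
  rw [invCount, invCount, ← add_sum_erase _ _ hu, sum_congr rfl hrow, sum_add_distrib,
    ← card_filter, hcol]
  ring

/-- Twisting by `(-1) ^ invCount p` turns the incidence numbers of the order `<` into those of the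
lexicographic order by `(p x, x)`. -/
lemma incidence_erase_mul_neg_one_pow_invCount {τ : Finset V} {u : V} (hu : u ∈ τ) :
    incidence τ (τ.erase u) * (-1) ^ invCount p (τ.erase u) =
      (-1) ^ invCount p τ * (-1) ^ lexRank p τ u := by
  have hpoint : #{x ∈ τ | x < u} + #{x ∈ τ | x < u ∧ p u < p x} + #{x ∈ τ | u < x ∧ p x < p u} =
      lexRank p τ u + 2 * #{x ∈ τ | x < u ∧ p u < p x} := by
    simp only [lexRank, card_filter, mul_sum, ← sum_add_distrib]
    exact sum_congr rfl fun x _ => by grind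
  have hinv := invCount_erase_add p hu
  rw [incidence_erase hu, ← pow_add, ← pow_add]
  exact neg_one_pow_eq_of_add_two_mul (j := #{x ∈ τ | u < x ∧ p x < p u}) (by omega)

lemma neg_one_pow_lexRank_of_filter_eq_pair {τ : Finset V} {u w : V} (huw : u ≠ w)
    (hp : p u = p w) (hpart : {x ∈ τ | p x = p u} = {u, w}) :
    (-1 : ℝ) ^ lexRank p τ w = -(-1) ^ lexRank p τ u := by
  have hrank : ∀ v, p v = p u →
      lexRank p τ v = #{x ∈ τ | p x < p u} + #{x ∈ ({u, w} : Finset V) | x < v} := by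
    intro v hv
    rw [lexRank, hv, ← hpart, filter_filter]
  rw [hrank w hp.symm, hrank u rfl]
  apply neg_one_pow_eq_neg_of_succ
  rcases huw.lt_or_gt with h | h <;>
    simp [filter_insert, filter_singleton, h, h.not_gt]

/-- If `f` lives on transversals of the fibres of `p`, each `τ` has at most two facets in the support
of `f`, and they come with opposite lexicographic signs. -/
lemma sq_sum_neg_one_pow_lexRank {f : Finset V → ZMod 2}
    (hf : ∀ σ, f σ ≠ 0 → ∀ i, #{x ∈ σ | p x = i} = 1) (τ : Finset V) :
    (∑ v ∈ τ, (-1 : ℝ) ^ lexRank p τ v * (f (τ.erase v)).val) ^ 2 =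
      if ∑ v ∈ τ, f (τ.erase v) ≠ 0 then 1 else 0 := by
  by_cases h : ∃ u ∈ τ, f (τ.erase u) ≠ 0
  swap
  · push Not at h
    rw [sum_eq_zero fun v hv => by rw [h v hv, ZMod.val_zero, Nat.cast_zero, mul_zero],
      sum_eq_zero h]
    simp
  obtain ⟨u, hu, hfu⟩ := h
  obtain ⟨w, hw⟩ := card_eq_one.mp (hf _ hfu (p u))
  obtain ⟨hw', hpw⟩ := mem_filter.mp (hw ▸ mem_singleton_self w)
  obtain ⟨hwu, hwτ⟩ := mem_erase.mp hw'
  have hpart : {x ∈ τ | p x = p u} = {u, w} := by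
    ext x
    simp only [mem_filter, mem_insert, mem_singleton]
    constructor
    · rintro ⟨hx, hpx⟩
      by_cases hxu : x = u
      · exact Or.inl hxu
      · have hx' : x ∈ {x ∈ τ.erase u | p x = p u} := mem_filter.mpr ⟨mem_erase.mpr ⟨hxu, hx⟩, hpx⟩
        exact Or.inr (mem_singleton.mp (hw ▸ hx'))
    · rintro (rfl | rfl)
      exacts [⟨hu, rfl⟩, ⟨hwτ, hpw⟩]
  have hzero : ∀ v ∈ τ, v ∉ ({u, w} : Finset V) → f (τ.erase v) = 0 := by
    intro v hv hvuw
    by_contra hfv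
    have hsub : ({u, w} : Finset V) ⊆ {x ∈ τ.erase v | p x = p u} := by
      rw [← hpart, filter_erase]
      exact subset_erase.mpr ⟨subset_refl _, hpart ▸ hvuw⟩
    have hcard := card_le_card hsub
    rw [hf _ hfv (p u), card_pair hwu.symm] at hcard
    omega
  have hsub : ({u, w} : Finset V) ⊆ τ := by simp [insert_subset_iff, hu, hwτ]
  rw [← sum_subset hsub fun v hv hvuw => by
      rw [hzero v hv hvuw, ZMod.val_zero, Nat.cast_zero, mul_zero],
    ← sum_subset hsub hzero, sum_pair hwu.symm, sum_pair hwu.symm,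
    neg_one_pow_lexRank_of_filter_eq_pair p hwu.symm hpw.symm hpart, neg_mul, ← sub_eq_add_neg,
    ← mul_sub, mul_pow, pow_right_comm, neg_one_sq, one_pow, one_mul, sq_val_sub_val]

def signedLift (f : Finset V → ZMod 2) (σ : Finset V) : ℝ :=
  (-1) ^ invCount p σ * (f σ).val

lemma sq_delta_signedLift {X : Finset (Finset V)} {k : ℕ} {f : Finset V → ZMod 2}
    (hf : ∀ σ, f σ ≠ 0 → ∀ i, #{x ∈ σ | p x = i} = 1) {τ : Finset V}
    (hτ : ∀ v ∈ τ, τ.erase v ∈ faces X k) :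
    delta X k (signedLift p f) τ ^ 2 = if deltaZ2 f τ ≠ 0 then 1 else 0 := by
  have hδ : delta X k (signedLift p f) τ =
      (-1) ^ invCount p τ * ∑ v ∈ τ, (-1 : ℝ) ^ lexRank p τ v * (f (τ.erase v)).val := by
    rw [delta, sum_incidence_mul_of_erase_mem hτ, mul_sum]
    refine sum_congr rfl fun v hv => ?_
    rw [signedLift, ← mul_assoc, incidence_erase_mul_neg_one_pow_invCount p hv, mul_assoc]
  rw [hδ, mul_pow, pow_right_comm, neg_one_sq, one_pow, one_mul, sq_sum_neg_one_pow_lexRank p hf]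
  rfl

end Transversal

section Cochains

variable {X : Finset (Finset V)} {k : ℕ}

lemma inn_lapUp_self (f : Finset V → ℝ) :
    inn X k (lapUp X k f) f = ∑ τ ∈ faces X (k + 1), delta X k f τ ^ 2 := by
  simp only [inn, lapUp, bdry, delta, sum_mul, sq, mul_sum]
  rw [sum_comm]
  exact sum_congr rfl fun τ _ => sum_congr rfl fun σ _ => sum_congr rfl fun ρ _ => by ring

lemma spectralGap_le_rayleigh {z : Finset V → ℝ} (hz : IsCycle X k z) (hzz : inn X k z z ≠ 0) :
    spectralGap X k ≤ inn X k (lapUp X k z) z / inn X k z z := by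
  refine csInf_le ⟨0, ?_⟩ ⟨z, hz, hzz, rfl⟩
  rintro r ⟨g, -, -, rfl⟩
  rw [inn_lapUp_self]
  exact div_nonneg (sum_nonneg fun _ _ => sq_nonneg _) (sum_nonneg fun _ _ => mul_self_nonneg _)

lemma spectralGap_le_mul_div {z : Finset V → ℝ} (hz : IsCycle X k z) {a b n : ℝ}
    (hnum : inn X k (lapUp X k z) z = a) (hden : b ≤ n * inn X k z z) (hb : 0 < b) :
    spectralGap X k ≤ n * a / b := by
  have hzz : 0 < inn X k z z := by
    have hnn : 0 ≤ inn X k z z := sum_nonneg fun _ _ => mul_self_nonneg _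
    rcases hnn.lt_or_eq with h | h
    · exact h
    · rw [← h, mul_zero] at hden
      linarith
  have ha : 0 ≤ a := hnum ▸ (inn_lapUp_self z).symm ▸ sum_nonneg fun _ _ => sq_nonneg _
  refine (spectralGap_le_rayleigh hz hzz.ne').trans ?_
  rw [hnum, div_le_div_iff₀ hzz hb]
  nlinarith

variable [Fintype V]

lemma sum_sq_delta_le {z : Finset V → ℝ} (hz : IsCycle X k z) (hzX : ∀ σ ∉ faces X k, z σ = 0)
    (S : Finset (Finset V)) :
    ∑ τ ∈ S, delta X k z τ ^ 2 ≤ Fintype.card V * inn X k z z := by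
  have hfaces : ∀ F : Finset V → ℝ, (∀ σ ∉ faces X k, F σ = 0) →
      ∑ σ, F σ = ∑ σ ∈ faces X k, F σ :=
    fun F hF => (sum_subset (subset_univ _) fun σ _ hσ => hF σ hσ).symm
  have hδ : ∀ τ, ∑ σ, incidence τ σ * z σ = delta X k z τ :=
    fun τ => hfaces _ fun σ hσ => by rw [hzX σ hσ, mul_zero]
  have hbdry : ∀ ρ, ∑ σ, incidence σ ρ * z σ = 0 :=
    fun ρ => (hfaces _ fun σ hσ => by rw [hzX σ hσ, mul_zero]).trans (hz ρ)
  have hnorm : ∑ σ, z σ ^ 2 = inn X k z z :=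
    (hfaces _ fun σ hσ => by rw [hzX σ hσ, sq, mul_zero]).trans (sum_congr rfl fun σ _ => sq (z σ))
  have hfull := sum_sq_coboundary_add_sum_sq_boundary z
  simp only [hδ, hbdry, hnorm] at hfull
  calc ∑ τ ∈ S, delta X k z τ ^ 2 ≤ ∑ τ, delta X k z τ ^ 2 :=
        sum_le_univ_sum_of_nonneg fun _ => sq_nonneg _
    _ = Fintype.card V * inn X k z z := by simpa using hfull

/-- The restriction to `faces X k` of the coboundary of the indicator of `ρ`. -/
def coboundaryVec (X : Finset (Finset V)) (k : ℕ) (ρ : Finset V) : EuclideanSpace ℝ (Finset V) :=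
  WithLp.toLp 2 fun σ => if σ ∈ faces X k then incidence σ ρ else 0

/-- `z` is the component of `g` orthogonal to the coboundaries; `δ ∘ δ = 0` on `τ` gives
`δ z τ = δ g τ`. -/
lemma exists_isCycle_delta_eq {g : Finset V → ℝ} (hg : ∀ σ ∉ faces X k, g σ = 0) :
    ∃ z : Finset V → ℝ, IsCycle X k z ∧ (∀ σ ∉ faces X k, z σ = 0) ∧
      ∀ τ, (∀ v ∈ τ, τ.erase v ∈ faces X k) → delta X k z τ = delta X k g τ := by
  obtain ⟨b, hb, z, hz, hgbz⟩ :=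
    (Submodule.span ℝ (Set.range (coboundaryVec X k))).exists_add_mem_mem_orthogonal
      (WithLp.toLp 2 g)
  obtain ⟨c, rfl⟩ := (Submodule.mem_span_range_iff_exists_fun ℝ).mp hb
  have hzg : ∀ σ, z σ = g σ - if σ ∈ faces X k then ∑ ρ, c ρ * incidence σ ρ else 0 := by
    intro σ
    have h := congrArg (fun x : EuclideanSpace ℝ (Finset V) => x σ) hgbz
    simp only [coboundaryVec, PiLp.add_apply, WithLp.ofLp_sum, WithLp.ofLp_smul, Finset.sum_apply,
      Pi.smul_apply, smul_eq_mul, mul_ite, mul_zero, sum_ite_irrel, sum_const_zero] at h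
    linarith
  refine ⟨z.ofLp, fun ρ => ?_, fun σ hσ => ?_, fun τ hτ => ?_⟩
  · have h := (Submodule.mem_orthogonal _ _).mp hz _ (Submodule.subset_span ⟨ρ, rfl⟩)
    simp only [coboundaryVec, PiLp.inner_apply, RCLike.inner_apply, Real.ringHom_apply, mul_ite,
      mul_zero, sum_ite_mem, univ_inter] at h
    rw [← h]
    exact sum_congr rfl fun σ _ => mul_comm _ _
  · exact (hzg σ).trans (by rw [hg σ hσ, if_neg hσ, sub_zero])
  · calc delta X k z.ofLp τ
        = ∑ σ ∈ faces X k,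
            (incidence τ σ * g σ - ∑ ρ, c ρ * (incidence τ σ * incidence σ ρ)) := by
          refine sum_congr rfl fun σ hσ => ?_
          rw [hzg, if_pos hσ, mul_sub, mul_sum]
          exact congrArg _ (sum_congr rfl fun ρ _ => by ring)
      _ = delta X k g τ := by
          simp only [sum_sub_distrib]
          rw [sum_comm]
          simp [← mul_sum, sum_incidence_mul_incidence_eq_zero hτ, delta]

end Cochains

theorem spectralGap_le_cheeger'_general
    {V : Type*} [DecidableEq V] [Fintype V] [LinearOrder V]
    (X : Finset (Finset V)) (k : ℕ)
    (hX : IsComplex X) :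
    (spectralGap X k : EReal) ≤ cheeger' X k := by
  refine le_sInf ?_
  rintro r ⟨A, f, hA, hf, rfl⟩
  split_ifs with hK
  · exact le_top
  obtain ⟨p, hp⟩ := hA.exists_label
  have hfp : ∀ σ, f σ ≠ 0 → ∀ i, #{x ∈ σ | p x = i} = 1 := fun σ hσ i => by
    rw [← (mem_filter.mp (hf σ hσ)).2 i]
    congr 1
    ext x
    simp [hp]
  have hfX : ∀ σ ∉ faces X k, signedLift p f σ = 0 := fun σ hσ => by
    have hfσ : f σ = 0 := by
      by_contra h
      exact hσ (mem_filter.mp (hf σ h)).1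
    rw [signedLift, hfσ, ZMod.val_zero, Nat.cast_zero, mul_zero]
  obtain ⟨z, hz, hzX, hδ⟩ := exists_isCycle_delta_eq hfX
  have hcount : ∀ S ⊆ faces (completion X k) (k + 1),
      ∑ τ ∈ S, delta X k z τ ^ 2 = #{τ ∈ S | deltaZ2 f τ ≠ 0} := fun S hS => by
    rw [← sum_boole]
    refine sum_congr rfl fun τ hτ => ?_
    have hfacets := fun v => erase_mem_faces_of_mem_faces_completion hX (hS hτ) (v := v)
    rw [hδ τ hfacets, sq_delta_signedLift p hfp hfacets]
  have hnum : inn X k (lapUp X k z) z = #(suppDelta X k f) := by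
    rw [inn_lapUp_self, hcount _ (faces_subset_faces_completion X k)]
    rfl
  have hden : (#(suppDelta (completion X k) k f) : ℝ) ≤ Fintype.card V * inn X k z z :=
    hcount _ subset_rfl ▸ sum_sq_delta_le hz hzX _
  exact EReal.coe_le_coe_iff.mpr
    (spectralGap_le_mul_div hz hnum hden (Nat.cast_pos.mpr (Nat.pos_of_ne_zero hK)))

/-- **Theorem 3.**  For any `k`-dimensional simplicial complex `X` with
`Z_{k-1}(X;ℝ) ≠ 0`, one has `λ(X) ≤ h'(X)`. -/
theorem spectralGap_le_cheeger'
    {V : Type*} [DecidableEq V] [Fintype V] [LinearOrder V]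
    (X : Finset (Finset V)) (k : ℕ)
    (hX : IsComplex X) (hdim : IsDim X k)
    (hZ : ∃ f : Finset V → ℝ, IsCycle X k f ∧ inn X k f f ≠ 0) :
    (spectralGap X k : EReal) ≤ cheeger' X k :=
  spectralGap_le_cheeger'_general X k hX

end HigherCheeger
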